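/- arXiv:2201.08593 — 3 statements merged into one kernel-verified Lean document; each statement's English description precedes it below -/
import Mathlib

section
/- Let $\alpha_1, \alpha_2, \beta_1, \beta_2$ be pairwise distinct points of $\partial\mathbb{H}^2$, and fix $p_0 \in \mathbb{H}^2$. Then $\lim_{y\to\beta_1} \dfrac{d(\pi_{\alpha_1,\beta_1}(y), \pi_{\alpha_1,\beta_1}(p_0))}{d(\pi_{\alpha_2,\beta_1}(y), \pi_{\alpha_2,\beta_1}(p_0))} = 1$, where $y \in \mathbb{H}^2$ tends to $\beta_1$ in $\overline{\mathbb{H}^2}$. -/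
open Filter Topology Set OnePoint

noncomputable section

/-- The hyperbolic plane, modelled by the Poincaré upper half-plane with its
hyperbolic metric (from Mathlib). -/
abbrev Hyp := UpperHalfPlane

/-- The ideal boundary `∂ℍ² = ℝ ∪ {∞}`. -/
abbrev Bdry := OnePoint ℝ

/-- Inclusion of `ℍ²` into the Riemann sphere; the closed-disk compactification
`\overline{ℍ²}` is the closure of the image, and convergence to ideal points is
phrased via this inclusion. -/
def toSphere (z : Hyp) : OnePoint ℂ := ((z : ℂ) : OnePoint ℂ)

/-- Inclusion of the ideal boundary into the Riemann sphere. -/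
def bdryToSphere : Bdry → OnePoint ℂ := OnePoint.map (fun r : ℝ => (r : ℂ))

/-- A geodesic line: an isometric embedding of `ℝ`. -/
def IsGeodesicLine (c : ℝ → Hyp) : Prop := ∀ s t : ℝ, dist (c s) (c t) = |s - t|

/-- `c` has ideal endpoints `a` (backward) and `b` (forward). -/
def JoinsBdry (c : ℝ → Hyp) (a b : Bdry) : Prop :=
  Tendsto (fun t => toSphere (c t)) atBot (𝓝 (bdryToSphere a)) ∧
  Tendsto (fun t => toSphere (c t)) atTop (𝓝 (bdryToSphere b))

/-- The complete geodesic of `ℍ²` with ideal endpoints `a` and `b`. -/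
def idealGeodesic (a b : Bdry) : Set Hyp :=
  {z | ∃ c : ℝ → Hyp, IsGeodesicLine c ∧ JoinsBdry c a b ∧ z ∈ Set.range c}

/-- `π` is the nearest-point (orthogonal) projection onto the geodesic `(a,b)`. -/
def IsNearestProj (a b : Bdry) (π : Hyp → Hyp) : Prop :=
  ∀ y, π y ∈ idealGeodesic a b ∧ ∀ z ∈ idealGeodesic a b, dist y (π y) ≤ dist y z

/-- The filter of points of `ℍ²` tending to the ideal point `b` in the
closed-disk compactification. -/
def tendsToBdry (b : Bdry) : Filter Hyp := comap toSphere (𝓝 (bdryToSphere b))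


/-!
Along a geodesic `c` with `c t → ∞` as `t → +∞`, the cosh distance formula gives
`eᵗ Im (c t) / |c t|² → (Im (c s) e⁻ˢ)⁻¹` for every `s`, so `Im (c s) = Im (c 0) eˢ`; the same
formula then forces `Re (c s)` to be constant. Hence the geodesic from `a ∈ ℝ` to `∞` is the
vertical line over `a`, the nearest-point projection onto it is `y ↦ a + i |y - a|`, and
`d(π y, π p) = |log |y - a| - log |p - a||`. As `y → ∞` this is `log |y| + O(1)` whatever `a` is,
so the ratio tends to `1`. The general case reduces to `β₁ = ∞` through an element of `SL(2, ℝ)`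
sending `β₁` to `∞`: it is an isometry of `ℍ²` that extends continuously to the ideal boundary.
-/

open UpperHalfPlane Matrix Bornology
open scoped MatrixGroups

lemma tendsToBdry_eq_comap (b : Bdry) :
    tendsToBdry b = comap ((↑) : ℍ → ℂ) (comap ((↑) : ℂ → OnePoint ℂ) (𝓝 (bdryToSphere b))) :=
  comap_comap.symm

lemma tendsToBdry_coe (r : ℝ) : tendsToBdry r = comap ((↑) : ℍ → ℂ) (𝓝 (r : ℂ)) := by
  rw [tendsToBdry_eq_comap, bdryToSphere, OnePoint.map_some, OnePoint.comap_coe_nhds]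

lemma tendsToBdry_infty : tendsToBdry ∞ = comap ((↑) : ℍ → ℂ) (cobounded ℂ) := by
  rw [tendsToBdry_eq_comap, bdryToSphere, OnePoint.map_infty, OnePoint.comap_coe_nhds_infty,
    coclosedCompact_eq_cocompact, Metric.cobounded_eq_cocompact]

lemma joinsBdry_iff {c : ℝ → ℍ} {a b : Bdry} :
    JoinsBdry c a b ↔ Tendsto c atBot (tendsToBdry a) ∧ Tendsto c atTop (tendsToBdry b) := by
  simp only [JoinsBdry, tendsToBdry, tendsto_comap_iff, Function.comp_def]

lemma moebius_eq_add_mul_inv {a b c d z : ℂ} (hdet : a * d - b * c = 1) (hc : c ≠ 0)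
    (hz : c * z + d ≠ 0) : (a * z + b) / (c * z + d) = a / c + -c⁻¹ * (c * z + d)⁻¹ := by
  rw [div_eq_iff hz, add_mul, mul_assoc, inv_mul_cancel₀ hz]
  field_simp
  linear_combination -hdet

instance : MulAction SL(2, ℝ) Bdry := MulAction.compHom _ SpecialLinearGroup.toGL

section SL2

variable (g : SL(2, ℝ))

lemma SL2_smul_infty : g • (∞ : Bdry) = if g 1 0 = 0 then ∞ else ↑(g 0 0 / g 1 0) :=
  OnePoint.smul_infty_eq_ite (g : GL (Fin 2) ℝ)

lemma SL2_smul_coe (r : ℝ) : g • (r : Bdry) =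
    if g 1 0 * r + g 1 1 = 0 then ∞ else ↑((g 0 0 * r + g 0 1) / (g 1 0 * r + g 1 1)) :=
  OnePoint.smul_some_eq_ite

lemma SL2_det_eq_one : (g 0 0 : ℂ) * g 1 1 - g 0 1 * g 1 0 = 1 := by
  have := g.det_coe
  rw [Matrix.det_fin_two] at this
  exact_mod_cast this

lemma coe_SL2_smul (z : ℍ) : ((g • z : ℍ) : ℂ) = (g 0 0 * z + g 0 1) / (g 1 0 * z + g 1 1) := by
  simp [coe_specialLinearGroup_apply]

lemma SL2_denom_ne_zero (z : ℍ) : (g 1 0 : ℂ) * z + g 1 1 ≠ 0 := by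
  simpa [denom] using denom_ne_zero (g : GL (Fin 2) ℝ) z

lemma tendsto_smul_tendsToBdry_infty : Tendsto (g • ·) (tendsToBdry ∞) (tendsToBdry (g • ∞)) := by
  rw [SL2_smul_infty]
  split_ifs with hc
  · rw [tendsToBdry_infty, tendsto_comap_iff]
    have had : (g 0 0 : ℂ) * g 1 1 = 1 := by simpa [hc] using SL2_det_eq_one g
    have hlin : Tendsto (fun w : ℂ => g 0 0 / g 1 1 * w + g 0 1 / g 1 1) (cobounded ℂ)
        (cobounded ℂ) :=
      (tendsto_add_const_cobounded _).comp (tendsto_mul_left_cobounded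
        (div_ne_zero (left_ne_zero_of_mul_eq_one had) (right_ne_zero_of_mul_eq_one had)))
    refine (hlin.comp tendsto_comap).congr fun z => ?_
    simp only [Function.comp_apply, coe_SL2_smul, hc]
    push_cast
    ring
  · rw [tendsToBdry_infty, tendsToBdry_coe, tendsto_comap_iff]
    have hcC : (g 1 0 : ℂ) ≠ 0 := by exact_mod_cast hc
    have hden : Tendsto (fun w : ℂ => g 1 0 * w + g 1 1) (cobounded ℂ) (cobounded ℂ) :=
      (tendsto_add_const_cobounded _).comp (tendsto_mul_left_cobounded hcC)
    have hz := tendsto_comap (f := ((↑) : ℍ → ℂ)) (x := cobounded ℂ)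
    have hlim := ((tendsto_inv₀_cobounded.comp (hden.comp hz)).const_mul
      (-(g 1 0 : ℂ)⁻¹)).const_add ((g 0 0 : ℂ) / g 1 0)
    rw [mul_zero, add_zero] at hlim
    push_cast
    refine hlim.congr fun z => ?_
    simp only [Function.comp_apply, coe_SL2_smul,
      moebius_eq_add_mul_inv (SL2_det_eq_one g) hcC (SL2_denom_ne_zero g z)]

lemma tendsto_smul_tendsToBdry_coe (r : ℝ) :
    Tendsto (g • ·) (tendsToBdry r) (tendsToBdry (g • (r : Bdry))) := by
  rw [SL2_smul_coe]
  split_ifs with hr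
  · rw [tendsToBdry_infty, tendsToBdry_coe, tendsto_comap_iff]
    have hcC : (g 1 0 : ℂ) ≠ 0 := by
      rintro hc
      have hd : (g 1 1 : ℂ) = 0 := by simpa [hc] using congrArg ((↑) : ℝ → ℂ) hr
      simpa [hc, hd] using SL2_det_eq_one g
    have hden : Tendsto (fun z : ℍ => (g 1 0 : ℂ) * z + g 1 1) (comap (↑) (𝓝 (r : ℂ)))
        (𝓝[≠] 0) := by
      refine tendsto_nhdsWithin_iff.2 ⟨?_, Eventually.of_forall (SL2_denom_ne_zero g)⟩
      convert (tendsto_comap.const_mul (g 1 0 : ℂ)).add_const (g 1 1 : ℂ)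
      exact_mod_cast hr.symm
    refine ((tendsto_const_add_cobounded ((g 0 0 : ℂ) / g 1 0)).comp
      ((tendsto_mul_left_cobounded (neg_ne_zero.2 (inv_ne_zero hcC))).comp
        (tendsto_inv₀_nhdsNE_zero.comp hden))).congr fun z => ?_
    simp only [Function.comp_apply, coe_SL2_smul,
      moebius_eq_add_mul_inv (SL2_det_eq_one g) hcC (SL2_denom_ne_zero g z)]
  · rw [tendsToBdry_coe, tendsToBdry_coe, tendsto_comap_iff]
    have hrC : (g 1 0 : ℂ) * r + g 1 1 ≠ 0 := by exact_mod_cast hr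
    have hz := tendsto_comap (f := ((↑) : ℍ → ℂ)) (x := 𝓝 (r : ℂ))
    have hlim := ((hz.const_mul (g 0 0 : ℂ)).add_const (g 0 1 : ℂ)).div
      ((hz.const_mul (g 1 0 : ℂ)).add_const (g 1 1 : ℂ)) hrC
    push_cast
    exact hlim.congr fun z => (coe_SL2_smul g z).symm

theorem tendsto_smul_tendsToBdry (α : Bdry) :
    Tendsto (g • ·) (tendsToBdry α) (tendsToBdry (g • α)) := by
  induction α using OnePoint.rec with
  | infty => exact tendsto_smul_tendsToBdry_infty g
  | coe r => exact tendsto_smul_tendsToBdry_coe g r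

lemma IsGeodesicLine.smul {c : ℝ → ℍ} (hc : IsGeodesicLine c) : IsGeodesicLine (g • c ·) :=
  fun s t => by rw [dist_smul, hc]

lemma JoinsBdry.smul {c : ℝ → ℍ} {a b : Bdry} (hc : JoinsBdry c a b) :
    JoinsBdry (g • c ·) (g • a) (g • b) := by
  rw [joinsBdry_iff] at hc ⊢
  exact ⟨(tendsto_smul_tendsToBdry g a).comp hc.1, (tendsto_smul_tendsToBdry g b).comp hc.2⟩

lemma smul_mem_idealGeodesic {a b : Bdry} {z : ℍ} (hz : z ∈ idealGeodesic a b) :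
    g • z ∈ idealGeodesic (g • a) (g • b) := by
  obtain ⟨c, hc, hab, t, rfl⟩ := hz
  exact ⟨(g • c ·), hc.smul g, hab.smul g, t, rfl⟩

lemma smul_mem_idealGeodesic_iff {a b : Bdry} {z : ℍ} :
    g • z ∈ idealGeodesic (g • a) (g • b) ↔ z ∈ idealGeodesic a b := by
  refine ⟨fun hz => ?_, smul_mem_idealGeodesic g⟩
  simpa using smul_mem_idealGeodesic g⁻¹ hz

lemma IsNearestProj.smul_conj {a b : Bdry} {π : ℍ → ℍ} (hπ : IsNearestProj a b π) :
    IsNearestProj (g • a) (g • b) (fun w => g • π (g⁻¹ • w)) := by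
  intro y
  refine ⟨smul_mem_idealGeodesic g (hπ _).1, fun z hz => ?_⟩
  rw [← smul_inv_smul g z, smul_mem_idealGeodesic_iff] at hz
  calc dist y (g • π (g⁻¹ • y)) = dist (g⁻¹ • y) (π (g⁻¹ • y)) := by
        rw [← dist_smul g⁻¹, inv_smul_smul]
    _ ≤ dist (g⁻¹ • y) (g⁻¹ • z) := (hπ _).2 _ hz
    _ = dist y z := dist_smul _ _ _

lemma exists_SL2_smul_eq_infty (β : Bdry) : ∃ g : SL(2, ℝ), g • β = ∞ := by
  induction β using OnePoint.rec with
  | infty => exact ⟨1, one_smul _ _⟩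
  | coe b =>
    let g : SL(2, ℝ) := ⟨!![0, -1; 1, -b], by simp⟩
    refine ⟨g, ?_⟩
    rw [SL2_smul_coe, if_pos]
    change (1 : ℝ) * b + -b = 0
    ring

lemma exists_smul_eq_coe_of_smul_eq_infty {α β : Bdry} (hαβ : α ≠ β) (hβ : g • β = ∞) :
    ∃ a : ℝ, g • α = a :=
  OnePoint.ne_infty_iff_exists.1 (hβ ▸ (MulAction.injective g).ne hαβ) |>.imp fun _ => Eq.symm

end SL2

lemma mem_idealGeodesic_of_re_eq {a : ℝ} {z : ℍ} (hz : z.re = a) : z ∈ idealGeodesic a ∞ := by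
  set c : ℝ → ℍ := fun t => mk ⟨a, Real.exp t⟩ (Real.exp_pos t)
  have hcoe : ∀ t, (c t : ℂ) = a + Real.exp t * Complex.I := fun t => by
    apply Complex.ext <;> simp [c, Complex.exp_ofReal_re, Complex.exp_ofReal_im]
  refine ⟨c, fun s t => by rw [(isometry_vertical_line a).dist_eq, Real.dist_eq], ?_,
    Real.log z.im, ?_⟩
  · rw [joinsBdry_iff, tendsToBdry_coe, tendsToBdry_infty, tendsto_comap_iff, tendsto_comap_iff]
    constructor
    · have := (((Complex.continuous_ofReal.tendsto 0).comp Real.tendsto_exp_atBot).mul_const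
        Complex.I).const_add (a : ℂ)
      simpa [Function.comp_def, hcoe] using this
    · refine tendsto_norm_atTop_iff_cobounded.1 (tendsto_atTop_mono (fun t => ?_)
        Real.tendsto_exp_atTop)
      simpa [c, abs_of_pos (Real.exp_pos t)] using Complex.abs_im_le_norm (c t : ℂ)
  · ext
    apply Complex.ext <;> simp [c, hz, Real.exp_log z.im_pos]

lemma tendsto_im_div_norm_sq_tendsToBdry_infty :
    Tendsto (fun z : ℍ => z.im / ‖(z : ℂ)‖ ^ 2) (tendsToBdry ∞) (𝓝 0) := by
  have hnorm : Tendsto (fun z : ℍ => ‖(z : ℂ)‖) (tendsToBdry ∞) atTop := by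
    rw [tendsToBdry_infty]
    exact tendsto_norm_cobounded_atTop.comp tendsto_comap
  refine squeeze_zero (fun z => by positivity) (fun z => ?_) hnorm.inv_tendsto_atTop
  calc z.im / ‖(z : ℂ)‖ ^ 2 ≤ ‖(z : ℂ)‖ / ‖(z : ℂ)‖ ^ 2 := by
        gcongr
        exact Complex.im_le_norm _
    _ = ‖(z : ℂ)‖⁻¹ := by field_simp

lemma tendsto_norm_sub_sq_div_tendsToBdry_infty (w : ℂ) :
    Tendsto (fun z : ℍ => ‖w - z‖ ^ 2 / ‖(z : ℂ)‖ ^ 2) (tendsToBdry ∞) (𝓝 1) := by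
  have hinv : Tendsto (fun z : ℍ => ((z : ℂ))⁻¹) (tendsToBdry ∞) (𝓝 0) := by
    rw [tendsToBdry_infty]
    exact tendsto_inv₀_cobounded.comp tendsto_comap
  have := ((((hinv.const_mul w).sub_const 1).norm).pow 2)
  simp only [mul_zero, zero_sub, norm_neg, norm_one, one_pow] at this
  refine this.congr fun z => ?_
  rw [← div_pow, ← norm_div, sub_div, div_self z.ne_zero, div_eq_mul_inv, norm_sub_rev]

namespace IsGeodesicLine

variable {c : ℝ → ℍ}

lemma im_mul_exp_mul_exp_mul_im_eq (hc : IsGeodesicLine c) (s t : ℝ) :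
    (c s).im * Real.exp (-s) * (Real.exp t * (c t).im) =
      (2 * (c s).im - (c s).im * Real.exp (s - t)) * (c t).im + ‖(c s : ℂ) - c t‖ ^ 2 := by
  have h := cosh_dist (c s) (c t)
  rw [hc, Real.cosh_abs, Real.cosh_eq, Complex.dist_eq] at h
  have hexp : Real.exp (-(s - t)) = Real.exp t * Real.exp (-s) := by
    rw [← Real.exp_add]; ring_nf
  rw [hexp] at h
  field_simp at h
  linear_combination h

lemma tendsto_exp_mul_im_div_norm_sq (hc : IsGeodesicLine c)
    (h : Tendsto c atTop (tendsToBdry ∞)) (s : ℝ) :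
    Tendsto (fun t => Real.exp t * (c t).im / ‖(c t : ℂ)‖ ^ 2) atTop
      (𝓝 ((c s).im * Real.exp (-s))⁻¹) := by
  have hexp : Tendsto (fun t => Real.exp (s - t)) atTop (𝓝 0) :=
    Real.tendsto_exp_atBot.comp (tendsto_atBot_add_const_left _ s tendsto_neg_atTop_atBot)
  have hR := (((tendsto_const_nhds (x := 2 * (c s).im)).sub (hexp.const_mul (c s).im)).mul
    (tendsto_im_div_norm_sq_tendsToBdry_infty.comp h)).add
    ((tendsto_norm_sub_sq_div_tendsToBdry_infty (c s)).comp h)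
  rw [mul_zero, zero_add] at hR
  rw [← one_div]
  refine (hR.div_const ((c s).im * Real.exp (-s))).congr fun t => ?_
  have hct : ‖(c t : ℂ)‖ ≠ 0 := norm_ne_zero_iff.2 (c t).ne_zero
  simp only [Function.comp_apply]
  field_simp
  linear_combination -im_mul_exp_mul_exp_mul_im_eq hc s t

lemma im_eq_mul_exp (hc : IsGeodesicLine c) (h : Tendsto c atTop (tendsToBdry ∞)) (s : ℝ) :
    (c s).im = (c 0).im * Real.exp s := by
  have := tendsto_nhds_unique (hc.tendsto_exp_mul_im_div_norm_sq h s)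
    (hc.tendsto_exp_mul_im_div_norm_sq h 0)
  rw [_root_.inv_inj, neg_zero, Real.exp_zero, mul_one] at this
  rw [← this, mul_assoc, ← Real.exp_add, neg_add_cancel, Real.exp_zero, mul_one]

lemma re_eq_of_im_eq_mul_exp (hc : IsGeodesicLine c)
    (him : ∀ s, (c s).im = (c 0).im * Real.exp s) (s : ℝ) : (c s).re = (c 0).re := by
  have h := cosh_dist' (c 0) (c s)
  rw [hc, Real.cosh_abs, Real.cosh_eq, him s, zero_sub, neg_neg] at h
  have hexp : Real.exp (-s) * Real.exp s = 1 := by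
    rw [← Real.exp_add, neg_add_cancel, Real.exp_zero]
  have hsq : ((c 0).re - (c s).re) ^ 2 = 0 := by
    field_simp at h
    linear_combination -h + (c 0).im ^ 2 * hexp
  linarith [pow_eq_zero_iff (n := 2) two_ne_zero |>.1 hsq]

end IsGeodesicLine

lemma re_eq_of_mem_idealGeodesic {a : ℝ} {z : ℍ} (hz : z ∈ idealGeodesic a ∞) : z.re = a := by
  obtain ⟨c, hc, hj, t, rfl⟩ := hz
  rw [joinsBdry_iff, tendsToBdry_coe, tendsto_comap_iff] at hj
  have hre := hc.re_eq_of_im_eq_mul_exp (hc.im_eq_mul_exp hj.2)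
  have hlim : Tendsto (fun s => (c s).re) atBot (𝓝 a) :=
    (Complex.continuous_re.tendsto _).comp hj.1
  rw [hre t]
  exact tendsto_nhds_unique (tendsto_const_nhds.congr fun s => (hre s).symm) hlim

lemma norm_sub_ofReal_pos (y : ℍ) (a : ℝ) : 0 < ‖(y : ℂ) - a‖ :=
  norm_pos_iff.2 (sub_ne_zero.2 (y.ne_ofReal a))

def projVertical (a : ℝ) (y : ℍ) : ℍ := mk ⟨a, ‖(y : ℂ) - a‖⟩ (norm_sub_ofReal_pos y a)

@[simp] lemma projVertical_re (a : ℝ) (y : ℍ) : (projVertical a y).re = a := rfl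

@[simp] lemma projVertical_im (a : ℝ) (y : ℍ) : (projVertical a y).im = ‖(y : ℂ) - a‖ := rfl

lemma cosh_dist_of_re_eq {a : ℝ} (y : ℍ) {z : ℍ} (hz : z.re = a) :
    Real.cosh (dist y z) = (‖(y : ℂ) - a‖ ^ 2 + z.im ^ 2) / (2 * y.im * z.im) := by
  rw [cosh_dist', hz, ← Complex.normSq_eq_norm_sq, Complex.normSq_apply]
  simp only [Complex.sub_re, Complex.ofReal_re, Complex.sub_im, Complex.ofReal_im, sub_zero,
    coe_re, coe_im]
  ring

lemma dist_projVertical_lt {a : ℝ} {y z : ℍ} (hz : z.re = a) (hne : z ≠ projVertical a y) :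
    dist y (projVertical a y) < dist y z := by
  have him : z.im ≠ ‖(y : ℂ) - a‖ := fun h => hne (ext_re_im hz h)
  rw [← abs_of_nonneg dist_nonneg, ← abs_of_nonneg (dist_nonneg (x := y) (y := z)),
    ← Real.cosh_lt_cosh, cosh_dist_of_re_eq y hz, cosh_dist_of_re_eq y (projVertical_re a y),
    projVertical_im]
  have hR := norm_sub_ofReal_pos y a
  have hy := y.im_pos
  rw [div_lt_div_iff₀ (by positivity) (by positivity)]
  nlinarith [mul_pos hR (sq_pos_of_ne_zero (sub_ne_zero.2 him)), mul_pos hy hR]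

lemma IsNearestProj.eq_projVertical {a : ℝ} {π : ℍ → ℍ} (hπ : IsNearestProj a ∞ π) (y : ℍ) :
    π y = projVertical a y := by
  by_contra hne
  obtain ⟨hmem, hmin⟩ := hπ y
  exact (hmin _ (mem_idealGeodesic_of_re_eq (projVertical_re a y))).not_gt
    (dist_projVertical_lt (re_eq_of_mem_idealGeodesic hmem) hne)

lemma dist_projVertical (a : ℝ) (y z : ℍ) :
    dist (projVertical a y) (projVertical a z) =
      |Real.log ‖(y : ℂ) - a‖ - Real.log ‖(z : ℂ) - a‖| := by
  rw [dist_of_re_eq ((projVertical_re a y).trans (projVertical_re a z).symm), Real.dist_eq,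
    projVertical_im, projVertical_im]

lemma Filter.Tendsto.abs_sub_div_abs_sub_of_sub_tendsto_zero {ι : Type*} {l : Filter ι}
    {A B : ι → ℝ} (hB : Tendsto B l atTop) (hAB : Tendsto (fun x => A x - B x) l (𝓝 0))
    (c₁ c₂ : ℝ) : Tendsto (fun x => |A x - c₁| / |B x - c₂|) l (𝓝 1) := by
  have hinv : Tendsto (fun x => (B x - c₂)⁻¹) l (𝓝 0) :=
    (tendsto_atTop_add_const_right l (-c₂) hB).inv_tendsto_atTop
  have hlim := (((hAB.add_const (c₂ - c₁)).mul hinv).const_add 1).abs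
  rw [mul_zero, add_zero, abs_one] at hlim
  refine hlim.congr' ?_
  filter_upwards [hB.eventually_ne_atTop c₂] with x hx
  rw [← abs_div]
  congr 1
  field_simp [sub_ne_zero.2 hx]
  ring

lemma tendsto_log_norm_sub_tendsToBdry_infty (a : ℝ) :
    Tendsto (fun y : ℍ => Real.log ‖(y : ℂ) - a‖) (tendsToBdry ∞) atTop := by
  rw [tendsToBdry_infty]
  exact Real.tendsto_log_atTop.comp (tendsto_norm_cobounded_atTop.comp
    ((tendsto_add_const_cobounded (-(a : ℂ))).comp tendsto_comap))

lemma tendsto_log_norm_sub_sub_log_norm_sub (a b : ℝ) :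
    Tendsto (fun y : ℍ => Real.log ‖(y : ℂ) - a‖ - Real.log ‖(y : ℂ) - b‖) (tendsToBdry ∞)
      (𝓝 0) := by
  have hinv : Tendsto (fun y : ℍ => ((y : ℂ) - b)⁻¹) (tendsToBdry ∞) (𝓝 0) := by
    rw [tendsToBdry_infty]
    exact tendsto_inv₀_cobounded.comp ((tendsto_add_const_cobounded (-(b : ℂ))).comp tendsto_comap)
  have hlim := (((hinv.const_mul ((b : ℂ) - a)).const_add 1).norm).log (by simp)
  rw [mul_zero, add_zero, norm_one, Real.log_one] at hlim
  refine hlim.congr fun y => ?_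
  have hb : (y : ℂ) - b ≠ 0 := sub_ne_zero.2 (y.ne_ofReal b)
  rw [← Real.log_div (norm_sub_ofReal_pos y a).ne' (norm_sub_ofReal_pos y b).ne', ← norm_div]
  congr 2
  field_simp
  ring

lemma tendsto_dist_projVertical_div_dist_projVertical (a₁ a₂ : ℝ) (p : ℍ) :
    Tendsto (fun y => dist (projVertical a₁ y) (projVertical a₁ p) /
      dist (projVertical a₂ y) (projVertical a₂ p)) (tendsToBdry ∞) (𝓝 1) := by
  simp only [dist_projVertical]
  exact (tendsto_log_norm_sub_tendsToBdry_infty a₂).abs_sub_div_abs_sub_of_sub_tendsto_zero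
    (tendsto_log_norm_sub_sub_log_norm_sub a₁ a₂) _ _

theorem projection_distance_ratio_tendsto_one_general
    (α₁ α₂ β₁ : Bdry)
    (h₁b₁ : α₁ ≠ β₁)
    (h₂b₁ : α₂ ≠ β₁)
    (p₀ : Hyp)
    (π₁ π₂ : Hyp → Hyp)
    (hπ₁ : IsNearestProj α₁ β₁ π₁) (hπ₂ : IsNearestProj α₂ β₁ π₂) :
    Tendsto (fun y : Hyp => dist (π₁ y) (π₁ p₀) / dist (π₂ y) (π₂ p₀))
      (tendsToBdry β₁) (𝓝 1) := by
  obtain ⟨g, hg⟩ := exists_SL2_smul_eq_infty β₁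
  obtain ⟨a₁, ha₁⟩ := exists_smul_eq_coe_of_smul_eq_infty g h₁b₁ hg
  obtain ⟨a₂, ha₂⟩ := exists_smul_eq_coe_of_smul_eq_infty g h₂b₁ hg
  have hproj {α : Bdry} {a : ℝ} {π : ℍ → ℍ} (hπ : IsNearestProj α β₁ π) (ha : g • α = a)
      (y : ℍ) : g • π y = projVertical a (g • y) := by
    have := (ha ▸ hg ▸ hπ.smul_conj g).eq_projVertical (g • y)
    rwa [inv_smul_smul] at this
  have hlim := tendsto_dist_projVertical_div_dist_projVertical a₁ a₂ (g • p₀)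
  refine (hlim.comp (hg ▸ tendsto_smul_tendsToBdry g β₁)).congr fun y => ?_
  simp only [Function.comp_apply, ← hproj hπ₁ ha₁, ← hproj hπ₂ ha₂, dist_smul]

/-- For pairwise distinct ideal points `α₁,α₂,β₁,β₂` and `p₀ ∈ ℍ²`,
`lim_{y→β₁} d(π_{α₁,β₁}(y),π_{α₁,β₁}(p₀)) / d(π_{α₂,β₁}(y),π_{α₂,β₁}(p₀)) = 1`. -/
theorem projection_distance_ratio_tendsto_one
    (α₁ α₂ β₁ β₂ : Bdry)
    (h₁₂ : α₁ ≠ α₂) (h₁b₁ : α₁ ≠ β₁) (h₁b₂ : α₁ ≠ β₂)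
    (h₂b₁ : α₂ ≠ β₁) (h₂b₂ : α₂ ≠ β₂) (hb : β₁ ≠ β₂)
    (p₀ : Hyp)
    (π₁ π₂ : Hyp → Hyp)
    (hπ₁ : IsNearestProj α₁ β₁ π₁) (hπ₂ : IsNearestProj α₂ β₁ π₂) :
    Tendsto (fun y : Hyp => dist (π₁ y) (π₁ p₀) / dist (π₂ y) (π₂ p₀))
      (tendsToBdry β₁) (𝓝 1) :=
  projection_distance_ratio_tendsto_one_general α₁ α₂ β₁ h₁b₁ h₂b₁ p₀ π₁ π₂ hπ₁ hπ₂
end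
end

section
/- Let $\hat{\pi}: \hat{X} \to X$ be a surjective local isometry between compact metric spaces, $\hat{h}$ and $h$ homeomorphisms of $\hat{X}$ and $X$ with $\hat{\pi}\hat{h} = h\hat{\pi}$. Suppose $\alpha > 0$ is such that any two distinct points of $\hat{X}$ with the same image under $\hat{\pi}$ are at distance at least $\alpha$, and $\epsilon > 0$ satisfies: (i) $\epsilon < \alpha/2$; (ii) $\hat{d}(\hat x,\hat y) < \epsilon$ implies $\hat{d}(\hat h \hat x, \hat h \hat y) < \alpha/2$; (iii) $\hat{\pi}$ restricted to any ball of radius $\epsilon$ is an isometry onto a ball of $X$. Then for every $n > 0$ and every maximal $(n,\epsilon)$-separated subset $A_{n,\epsilon}$ of $X$ for $h$, the Bowen $(n,\epsilon)$-balls centered at points of $\hat{\pi}^{-1}(A_{n,\epsilon})$ cover $\hat{X}$. -/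
open Filter Topology Set
open scoped ENNReal NNReal

noncomputable section

variable {X : Type*} [MetricSpace X]

/-- The Bowen dynamical distance `dₙ(x,y) = max_{0 ≤ k ≤ n-1} d(f^k x, f^k y)`. -/
def bowenDist (f : X → X) (n : ℕ) (x y : X) : ℝ :=
  ((Finset.range n).sup fun k => nndist (f^[k] x) (f^[k] y) : NNReal)

/-- A set is `(n,ε)`-separated if any two distinct points of it are at Bowen
distance `dₙ` at least `ε`. -/
def IsDynSeparated (f : X → X) (n : ℕ) (ε : ℝ) (A : Set X) : Prop :=
  ∀ x ∈ A, ∀ y ∈ A, x ≠ y → ε ≤ bowenDist f n x y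

/-- `a_{n,ε}`: the maximal cardinality of an `(n,ε)`-separated set. -/
def maxSepCard (f : X → X) (n : ℕ) (ε : ℝ) : ℕ∞ :=
  ⨆ (A : Finset X) (_ : IsDynSeparated f n ε ↑A), (A.card : ℕ∞)

/-- Bowen's topological entropy
`h_top(f) = lim_{ε→0} limsup_n (log a_{n,ε})/n`, the limit over `ε → 0` being a
supremum since `ε ↦ limsup` is antitone. -/
def bowenEntropy (f : X → X) : EReal :=
  ⨆ (ε : ℝ) (_ : 0 < ε),
    Filter.limsup
      (fun n : ℕ => ENNReal.log ((maxSepCard f n ε : ℕ∞) : ℝ≥0∞) / (n : EReal))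
      Filter.atTop

/-- `π` is a local isometry: every point has a neighbourhood on which `π`
preserves distances. -/
def IsLocalIsometry {Y : Type*} [MetricSpace Y] (π : X → Y) : Prop :=
  ∀ x : X, ∃ U ∈ 𝓝 x, ∀ y ∈ U, ∀ z ∈ U, dist (π y) (π z) = dist y z

lemma bowenDist_lt_iff {Y : Type*} [MetricSpace Y] (f : Y → Y) (n : ℕ) {x y : Y}
    {ε : ℝ} (hε : 0 < ε) :
    bowenDist f n x y < ε ↔ ∀ k < n, dist (f^[k] x) (f^[k] y) < ε := by
  set e : ℝ≥0 := ⟨ε, hε.le⟩ with he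
  have h0 : (⊥ : ℝ≥0) < e := hε
  rw [bowenDist, show ε = (e : ℝ) from rfl, NNReal.coe_lt_coe, Finset.sup_lt_iff h0]
  constructor
  · intro H k hk
    have := H k (Finset.mem_range.2 hk)
    exact_mod_cast this
  · intro H k hk
    have := H k (Finset.mem_range.1 hk)
    rw [dist_nndist] at this
    exact_mod_cast this

lemma bowenDist_self {Y : Type*} [MetricSpace Y] (f : Y → Y) (n : ℕ) (x : Y) :
    bowenDist f n x x = 0 := by
  simp [bowenDist]

lemma bowenDist_comm {Y : Type*} [MetricSpace Y] (f : Y → Y) (n : ℕ) (x y : Y) :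
    bowenDist f n x y = bowenDist f n y x := by
  simp [bowenDist, nndist_comm]

/-- **the covering claim.** With `π : X̂ → X` a surjective local
isometry between compact metric spaces intertwining the homeomorphisms `ĥ, h`,
`α > 0` separating the fibers of `π`, and `ε > 0` small as in (i)–(iii), for
every `n > 0` and every maximal `(n,ε)`-separated set `A ⊆ X` for `h`, the Bowen
`(n,ε)`-balls centered at the points of `π⁻¹(A)` cover `X̂`. -/
theorem dynballs_over_maximal_separated_cover
    {Xhat X : Type*} [MetricSpace Xhat] [MetricSpace X]
    [CompactSpace Xhat] [CompactSpace X]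
    (π : Xhat → X) (hsurj : Function.Surjective π) (hloc : IsLocalIsometry π)
    (hhat : Xhat ≃ₜ Xhat) (h : X ≃ₜ X)
    (hcomm : π ∘ hhat = h ∘ π)
    (α : ℝ) (hα : 0 < α)
    (hfib : ∀ x y : Xhat, x ≠ y → π x = π y → α ≤ dist x y)
    (ε : ℝ) (hε : 0 < ε)
    (hε₁ : ε < α / 2)
    (hε₂ : ∀ x y : Xhat, dist x y < ε → dist (hhat x) (hhat y) < α / 2)
    (hε₃ : ∀ x : Xhat,
      (∀ y ∈ Metric.ball x ε, ∀ z ∈ Metric.ball x ε,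
          dist (π y) (π z) = dist y z) ∧
        π '' Metric.ball x ε = Metric.ball (π x) ε)
    (n : ℕ) (hn : 0 < n)
    (A : Set X) (hA : IsDynSeparated ⇑h n ε A)
    (hAmax : ∀ B : Set X, A ⊆ B → IsDynSeparated ⇑h n ε B → B = A) :
    ∀ xhat : Xhat, ∃ yhat : Xhat, π yhat ∈ A ∧ bowenDist ⇑hhat n yhat xhat < ε := by
  intro xhat
  have hsem : Function.Semiconj π ⇑hhat ⇑h := fun z => congrFun hcomm z
  have hiter : ∀ (k : ℕ) (z : Xhat), π (hhat^[k] z) = h^[k] (π z) := fun k z =>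
    (hsem.iterate_right k) z
  set x : X := π xhat with hx
  -- Step 1: find a ∈ A with bowenDist h n a x < ε
  have step1 : ∃ a ∈ A, bowenDist ⇑h n a x < ε := by
    by_contra hcon
    push_neg at hcon
    have hsep : IsDynSeparated ⇑h n ε (insert x A) := by
      intro u hu v hv huv
      rcases Set.mem_insert_iff.1 hu with rfl | hu
      · rcases Set.mem_insert_iff.1 hv with rfl | hv
        · exact absurd rfl huv
        · rw [bowenDist_comm]; exact hcon v hv
      · rcases Set.mem_insert_iff.1 hv with rfl | hv
        · exact hcon u hu
        · exact hA u hu v hv huv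
    have hxA : x ∈ A := by
      rw [← hAmax (insert x A) (Set.subset_insert _ _) hsep]
      exact Set.mem_insert _ _
    have := hcon x hxA
    rw [bowenDist_self] at this
    exact absurd this (not_le.2 hε)
  obtain ⟨a, haA, ha⟩ := step1
  have hdist : ∀ k < n, dist (h^[k] a) (h^[k] x) < ε :=
    (bowenDist_lt_iff _ _ hε).1 ha
  -- Step 2: lifts
  have hex : ∀ k, k < n → ∃ w, w ∈ Metric.ball (hhat^[k] xhat) ε ∧ π w = h^[k] a := by
    intro k hk
    have hmem : h^[k] a ∈ Metric.ball (π (hhat^[k] xhat)) ε := by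
      rw [Metric.mem_ball, hiter]
      exact hdist k hk
    rw [← (hε₃ (hhat^[k] xhat)).2] at hmem
    obtain ⟨w, hw, hwp⟩ := hmem
    exact ⟨w, hw, hwp⟩
  choose y hy1 hy2 using hex
  -- orbit claim
  have key : ∀ (k : ℕ) (hk : k < n), hhat^[k] (y 0 hn) = y k hk := by
    intro k
    induction k with
    | zero => intro hk; rfl
    | succ k ih =>
      intro hk1
      have hk : k < n := Nat.lt_of_succ_lt hk1
      have ihk := ih hk
      have heq : hhat (y k hk) = y (k + 1) hk1 := by
        by_contra hne
        have hpi : π (hhat (y k hk)) = π (y (k + 1) hk1) := by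
          rw [hsem (y k hk), hy2 k hk, hy2 (k + 1) hk1,
            Function.iterate_succ_apply']
        have hd1 : dist (hhat (y k hk)) (hhat^[k + 1] xhat) < α / 2 := by
          rw [Function.iterate_succ_apply']
          exact hε₂ _ _ (Metric.mem_ball.1 (hy1 k hk))
        have hd2 : dist (y (k + 1) hk1) (hhat^[k + 1] xhat) < α / 2 :=
          lt_trans (Metric.mem_ball.1 (hy1 (k + 1) hk1)) hε₁
        have : dist (hhat (y k hk)) (y (k + 1) hk1) < α := by
          calc dist (hhat (y k hk)) (y (k + 1) hk1)
              ≤ dist (hhat (y k hk)) (hhat^[k + 1] xhat)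
                + dist (y (k + 1) hk1) (hhat^[k + 1] xhat) := dist_triangle_right _ _ _
            _ < α / 2 + α / 2 := add_lt_add hd1 hd2
            _ = α := by ring
        exact absurd this (not_lt.2 (hfib _ _ hne hpi))
      rw [Function.iterate_succ_apply', ihk, heq]
  refine ⟨y 0 hn, ?_, ?_⟩
  · rw [hy2 0 hn]; exact haA
  · rw [bowenDist_lt_iff _ _ hε]
    intro k hk
    rw [key k hk]
    exact Metric.mem_ball.1 (hy1 k hk)
end
end

section
/- Let $f$ be a homeomorphism of a closed orientable hyperbolic surface $S$ homotopic to the identity, with canonical lift $\tilde f : \mathbb{H}^2 \to \mathbb{H}^2$ (the lift extending continuously to the identity on $\partial\mathbb{H}^2$). Then for every $n \ge 1$, the homotopical rotation set satisfies $\rho(f^n) = n\,\rho(f)$, i.e. $(\alpha,\beta,v) \in \rho(f^n)$ if and only if $(\alpha,\beta,v/n) \in \rho(f)$. -/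
open Filter Topology Set OnePoint

noncomputable section

/-- A group `G` acting on `ℍ²` as the deck transformation group of a closed
hyperbolic surface: an isometric, properly discontinuous, free and cocompact
action. -/
structure DeckAction (G : Type*) [Group G] [MulAction G Hyp] : Prop where
  isometric : ∀ g : G, Isometry (fun x : Hyp => g • x)
  properlyDisc : ∀ K : Set Hyp, IsCompact K →
    {g : G | ((fun x : Hyp => g • x) '' K ∩ K).Nonempty}.Finite
  free : ∀ g : G, g ≠ 1 → ∀ x : Hyp, g • x ≠ x
  cocompact : ∃ K : Set Hyp, IsCompact K ∧ ∀ x : Hyp, ∃ g : G, g • x ∈ K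

/-- `F` is the canonical lift to `ℍ²` of a homeomorphism of the closed hyperbolic
surface `ℍ²/G` homotopic to the identity: it commutes with all deck
transformations and extends continuously by the identity to `∂ℍ²`. -/
structure CanonicalLift (G : Type*) [Group G] [MulAction G Hyp]
    (F : Hyp ≃ₜ Hyp) : Prop where
  equivariant : ∀ (g : G) (x : Hyp), F (g • x) = g • F x
  bdryId : ∀ b : Bdry,
    Tendsto (fun y : Hyp => toSphere (F y)) (tendsToBdry b) (𝓝 (bdryToSphere b))

/-- `(α, β, v)` belongs to the homotopical rotation set of `f` (expressed via its
canonical lift `F`): either `v = 0` (all zero-speed triples belong to the rotation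
set), or `v > 0`, `α ≠ β`, and there are points `xₖ ∈ ℍ²` and times `nₖ → ∞` with
`xₖ → α`, `F^{nₖ}(xₖ) → β` in `\overline{ℍ²}`, and
`d(π_{α,β}(xₖ), π_{α,β}(F^{nₖ}(xₖ)))/nₖ → v`. -/
def InRotSet (F : Hyp → Hyp) (α β : Bdry) (v : ℝ) : Prop :=
  v = 0 ∨
    (α ≠ β ∧ 0 < v ∧
      ∃ (x : ℕ → Hyp) (n : ℕ → ℕ) (π : Hyp → Hyp),
        IsNearestProj α β π ∧
        Tendsto n atTop atTop ∧
        Tendsto (fun k => toSphere (x k)) atTop (𝓝 (bdryToSphere α)) ∧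
        Tendsto (fun k => toSphere (F^[n k] (x k))) atTop (𝓝 (bdryToSphere β)) ∧
        Tendsto (fun k => dist (π (x k)) (π (F^[n k] (x k))) / (n k : ℝ))
          atTop (𝓝 v))

/-!
Multiplying the times by `n` turns witnesses for `fⁿ` into witnesses for `f` at speed `v / n`.
Conversely, an orbit segment of `f` of length `mₖ = n qₖ + rₖ` becomes, after its first `rₖ < n`
steps, an orbit segment of `fⁿ` of length `qₖ`. Since `f` commutes with a cocompact isometric
action, it moves points a uniformly bounded distance, so those first steps move the starting
point a bounded distance; because `f` extends by the identity to `∂ℍ²`, the new starting points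
still tend to `α`; and because the nearest-point projection onto a geodesic is `1`-Lipschitz, the
projected displacement changes by a bounded amount, which does not affect the speed. The Lipschitz
bound is checked after moving the geodesic onto the imaginary axis by an element of `SL(2, ℝ)`:
there the projection is `z ↦ i ‖z‖`, and `log ‖z‖` is `1`-Lipschitz.
-/

section Geometry

open UpperHalfPlane Matrix Real
open scoped MatrixGroups

def sl2Mk (a b c d : ℝ) (h : a * d - b * c = 1) : SL(2, ℝ) :=
  ⟨!![a, b; c, d], by rwa [det_fin_two_of]⟩

@[simp] lemma coe_sl2Mk (a b c d : ℝ) (h : a * d - b * c = 1) :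
    (sl2Mk a b c d h : Matrix (Fin 2) (Fin 2) ℝ) = !![a, b; c, d] := rfl

lemma coe_sl2Mk_smul (a b c d : ℝ) (h : a * d - b * c = 1) (z : ℍ) :
    ((sl2Mk a b c d h • z : ℍ) : ℂ) = (a * z + b) / (c * z + d) := by
  simp [coe_specialLinearGroup_apply]

lemma re_sl2Mk_smul_eq_zero {a b c d : ℝ} (h : a * d - b * c = 1) {z : ℍ}
    (hz : a * c * (z.re ^ 2 + z.im ^ 2) + (a * d + b * c) * z.re + b * d = 0) :
    (sl2Mk a b c d h • z).re = 0 := by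
  rw [← coe_re, coe_sl2Mk_smul, Complex.div_re, ← add_div]
  convert zero_div _ using 2
  simp only [Complex.add_re, Complex.add_im, Complex.mul_re, Complex.mul_im, Complex.ofReal_re,
    Complex.ofReal_im, coe_re, coe_im]
  linear_combination hz

def flipSL : SL(2, ℝ) := sl2Mk 0 (-1) 1 0 (by norm_num)

def diagSL (s : ℝ) : SL(2, ℝ) :=
  sl2Mk (exp (s / 2)) 0 0 (exp (-(s / 2))) (by rw [← exp_add]; simp)

lemma coe_flipSL_smul (z : ℍ) : ((flipSL • z : ℍ) : ℂ) = -(z : ℂ)⁻¹ := by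
  rw [flipSL, coe_sl2Mk_smul]
  simp [div_eq_inv_mul]

lemma coe_diagSL_smul (s : ℝ) (z : ℍ) : ((diagSL s • z : ℍ) : ℂ) = exp s * z := by
  rw [diagSL, coe_sl2Mk_smul]
  have : (exp s : ℂ) = exp (s / 2) / exp (-(s / 2)) := by
    rw [← Complex.ofReal_div, ← Real.exp_sub]; ring_nf
  rw [this]
  simp [div_mul_eq_mul_div]

lemma im_flipSL_smul (z : ℍ) : (flipSL • z).im = z.im / ‖(z : ℂ)‖ ^ 2 := by
  rw [← coe_im, ← coe_im, coe_flipSL_smul, Complex.neg_im, Complex.inv_im,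
    Complex.normSq_eq_norm_sq]
  ring

lemma log_norm_eq_log_im_sub_log_im_flipSL_smul (z : ℍ) :
    log ‖(z : ℂ)‖ = (log z.im - log (flipSL • z).im) / 2 := by
  have hz : ‖(z : ℂ)‖ ≠ 0 := norm_ne_zero_iff.mpr z.ne_zero
  rw [im_flipSL_smul, log_div z.im_pos.ne' (pow_ne_zero 2 hz), log_pow]
  ring

/-- `log im` is `1`-Lipschitz, and `log ‖z‖` is half the difference of its values at `z` and
`-1 / z`. -/
lemma UpperHalfPlane.abs_log_norm_sub_le_dist (z w : ℍ) :
    |log ‖(z : ℂ)‖ - log ‖(w : ℂ)‖| ≤ dist z w := by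
  have h₁ := dist_log_im_le z w
  have h₂ := dist_log_im_le (flipSL • z) (flipSL • w)
  rw [(isometry_smul ℍ flipSL).dist_eq, Real.dist_eq] at h₂
  rw [Real.dist_eq] at h₁
  rw [log_norm_eq_log_im_sub_log_im_flipSL_smul, log_norm_eq_log_im_sub_log_im_flipSL_smul,
    ← sub_div, abs_div, abs_two, div_le_iff₀ two_pos]
  calc _ = |(log z.im - log w.im) - (log (flipSL • z).im - log (flipSL • w).im)| := by ring_nf
    _ ≤ _ := abs_sub _ _
    _ ≤ _ := by linarith

def imAxis (t : ℝ) : ℍ :=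
  ⟨exp t * Complex.I, by rw [Complex.im_ofReal_mul, Complex.I_im, mul_one]; exact exp_pos t⟩

@[simp] lemma coe_imAxis (t : ℝ) : (imAxis t : ℂ) = exp t * Complex.I := rfl

@[simp] lemma imAxis_re (t : ℝ) : (imAxis t).re = 0 := by
  rw [← coe_re, coe_imAxis, Complex.re_ofReal_mul, Complex.I_re, mul_zero]

@[simp] lemma imAxis_im (t : ℝ) : (imAxis t).im = exp t := by
  rw [← coe_im, coe_imAxis, Complex.im_ofReal_mul, Complex.I_im, mul_one]

lemma isometry_imAxis : Isometry imAxis := by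
  convert isometry_vertical_line 0 using 2 with t
  apply UpperHalfPlane.ext
  apply Complex.ext <;> simp [Complex.exp_ofReal_re]

lemma dist_imAxis (s t : ℝ) : dist (imAxis s) (imAxis t) = |s - t| := by
  rw [isometry_imAxis.dist_eq, Real.dist_eq]

lemma eq_imAxis_of_re_eq_zero {z : ℍ} (hz : z.re = 0) : z = imAxis (log z.im) := by
  apply UpperHalfPlane.ext
  apply Complex.ext <;> simp [hz, exp_log z.im_pos]

lemma diagSL_smul_imAxis (s t : ℝ) : diagSL s • imAxis t = imAxis (s + t) := by
  ext1
  rw [coe_diagSL_smul, coe_imAxis, coe_imAxis, exp_add]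
  push_cast; ring

lemma flipSL_smul_imAxis (t : ℝ) : flipSL • imAxis t = imAxis (-t) := by
  ext1
  rw [coe_flipSL_smul, coe_imAxis, coe_imAxis, exp_neg]
  have : (exp t : ℂ) ≠ 0 := by exact_mod_cast (exp_pos t).ne'
  rw [Complex.ofReal_inv]
  field_simp
  rw [Complex.I_sq]

lemma UpperHalfPlane.norm_coe_sq (z : ℍ) : ‖(z : ℂ)‖ ^ 2 = z.re ^ 2 + z.im ^ 2 := by
  rw [← Complex.normSq_eq_norm_sq, Complex.normSq_apply, coe_re, coe_im]; ring

lemma two_mul_im_mul_cosh_dist_imAxis (z : ℍ) (t : ℝ) :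
    2 * z.im * cosh (dist z (imAxis t)) = ‖(z : ℂ)‖ ^ 2 * exp (-t) + exp t := by
  rw [cosh_dist', imAxis_re, imAxis_im, norm_coe_sq, exp_neg]
  field_simp [z.im_pos.ne', (exp_pos t).ne']
  ring

lemma eq_log_norm_of_forall_dist_imAxis_le {z : ℍ} {s : ℝ}
    (h : ∀ t, dist z (imAxis s) ≤ dist z (imAxis t)) : s = log ‖(z : ℂ)‖ := by
  have hn : 0 < ‖(z : ℂ)‖ := norm_pos_iff.mpr z.ne_zero
  have hcosh : cosh (dist z (imAxis s)) ≤ cosh (dist z (imAxis (log ‖(z : ℂ)‖))) := by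
    rw [cosh_le_cosh, abs_of_nonneg dist_nonneg, abs_of_nonneg dist_nonneg]
    exact h _
  have key := mul_le_mul_of_nonneg_left hcosh (by linarith [z.im_pos] : (0 : ℝ) ≤ 2 * z.im)
  rw [two_mul_im_mul_cosh_dist_imAxis, two_mul_im_mul_cosh_dist_imAxis, exp_neg, exp_neg,
    exp_log hn] at key
  have hE := exp_pos s
  -- AM-GM: `‖z‖² / e^s + e^s ≥ 2 ‖z‖`, with equality only at `e^s = ‖z‖`
  have : (‖(z : ℂ)‖ - exp s) ^ 2 ≤ 0 := by
    field_simp at key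
    nlinarith
  rw [← exp_eq_exp, exp_log hn]
  nlinarith [sq_nonneg (‖(z : ℂ)‖ - exp s)]

lemma eq_imAxis_of_dist_imAxis_eq {w : ℍ} {a b t : ℝ} (hab : a ≠ b)
    (ha : dist w (imAxis a) = |t - a|) (hb : dist w (imAxis b) = |t - b|) : w = imAxis t := by
  have ea := two_mul_im_mul_cosh_dist_imAxis w a
  have eb := two_mul_im_mul_cosh_dist_imAxis w b
  rw [ha, cosh_abs, cosh_eq, norm_coe_sq] at ea
  rw [hb, cosh_abs, cosh_eq, norm_coe_sq] at eb
  simp only [exp_sub, exp_neg, neg_sub] at ea eb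
  have hT := exp_pos t
  have hAB : exp a ^ 2 ≠ exp b ^ 2 := by
    rw [← exp_nat_mul, ← exp_nat_mul]; simpa using hab
  field_simp at ea eb
  have him : w.im = exp t := by
    apply mul_left_cancel₀ (sub_ne_zero.mpr hAB)
    linear_combination ea - eb
  have hre : w.re = 0 := by
    rw [him] at ea
    have : exp t * w.re ^ 2 = 0 := by linear_combination -ea
    simpa [hT.ne'] using this
  apply UpperHalfPlane.ext
  apply Complex.ext <;> simp [hre, him, Complex.exp_ofReal_re]

/-- A vertical line through `z₀, z₁` is translated onto the imaginary axis; a half-circle through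
them, with centre `m` and radius `r`, is sent there by `z ↦ (z - (m - r)) / (2 r (m + r - z))`. -/
lemma exists_smul_re_eq_zero (z₀ z₁ : ℍ) :
    ∃ N : SL(2, ℝ), (N • z₀).re = 0 ∧ (N • z₁).re = 0 := by
  by_cases hre : z₀.re = z₁.re
  · refine ⟨sl2Mk 1 (-z₀.re) 0 1 (by ring), ?_, ?_⟩ <;>
      apply re_sl2Mk_smul_eq_zero <;> simp [hre]
  · obtain ⟨m, hm⟩ : ∃ m : ℝ, m * (2 * (z₀.re - z₁.re)) = ‖(z₀ : ℂ)‖ ^ 2 - ‖(z₁ : ℂ)‖ ^ 2 :=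
      ⟨_, div_mul_cancel₀ _ (mul_ne_zero two_ne_zero (sub_ne_zero.mpr hre))⟩
    rw [norm_coe_sq, norm_coe_sq] at hm
    have hR : 0 < (z₀.re - m) ^ 2 + z₀.im ^ 2 := by have := z₀.im_pos; positivity
    obtain ⟨r, hr, hr₀⟩ : ∃ r : ℝ, 0 < r ∧ r ^ 2 = (z₀.re - m) ^ 2 + z₀.im ^ 2 :=
      ⟨_, sqrt_pos.mpr hR, sq_sqrt hR.le⟩
    have hr₁ : r ^ 2 = (z₁.re - m) ^ 2 + z₁.im ^ 2 := by linear_combination hr₀ - hm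
    refine ⟨sl2Mk (1 / (2 * r)) (-(m - r) / (2 * r)) (-1) (m + r) (by field_simp; ring), ?_, ?_⟩ <;>
      apply re_sl2Mk_smul_eq_zero
    · field_simp
      linear_combination hr₀
    · field_simp
      linear_combination hr₁

lemma exists_smul_imAxis_eq {c : ℝ → ℍ} (hc : IsGeodesicLine c) :
    ∃ g : SL(2, ℝ), ∀ t, c t = g • imAxis t := by
  obtain ⟨N, h₀, h₁⟩ := exists_smul_re_eq_zero (c 0) (c 1)
  set a := log (N • c 0).im
  set b := log (N • c 1).im
  have hdist : ∀ s t, dist (N • c s) (N • c t) = |s - t| := fun s t => by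
    rw [(isometry_smul ℍ N).dist_eq, hc]
  have hba : |b - a| = 1 := by
    rw [← dist_imAxis, ← eq_imAxis_of_re_eq_zero h₀, ← eq_imAxis_of_re_eq_zero h₁, hdist]
    norm_num
  have hline : ∀ t, N • c t = imAxis (a + (b - a) * t) := fun t => by
    refine eq_imAxis_of_dist_imAxis_eq (a := a) (b := b) (fun h => by simp [h] at hba) ?_ ?_
    · rw [← eq_imAxis_of_re_eq_zero h₀, hdist]
      rw [show a + (b - a) * t - a = (b - a) * t by ring, abs_mul, hba]
      simp
    · rw [← eq_imAxis_of_re_eq_zero h₁, hdist]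
      rw [show a + (b - a) * t - b = (b - a) * (t - 1) by ring, abs_mul, hba, one_mul]
  rcases abs_eq (zero_le_one' ℝ) |>.mp hba with h | h
  · refine ⟨N⁻¹ * diagSL a, fun t => ?_⟩
    rw [mul_smul, diagSL_smul_imAxis, eq_inv_smul_iff, hline, h, one_mul]
  · refine ⟨N⁻¹ * diagSL a * flipSL, fun t => ?_⟩
    rw [mul_smul, mul_smul, flipSL_smul_imAxis, diagSL_smul_imAxis, eq_inv_smul_iff, hline, h]
    ring_nf

lemma tendsto_coe_imAxis_atBot : Tendsto (fun t => (imAxis t : ℂ)) atBot (𝓝 0) := by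
  have := ((Complex.continuous_ofReal.tendsto 0).comp tendsto_exp_atBot).mul_const Complex.I
  simpa [Function.comp_def] using this

lemma tendsto_coe_nhds_infty_of_tendsto_cobounded {ι : Type*} {l : Filter ι} {f : ι → ℂ}
    (h : Tendsto f l (Bornology.cobounded ℂ)) :
    Tendsto (fun i => (f i : OnePoint ℂ)) l (𝓝 ∞) := by
  rw [Metric.cobounded_eq_cocompact, ← coclosedCompact_eq_cocompact] at h
  exact OnePoint.tendsto_coe_infty.comp h

lemma tendsto_toSphere_smul_imAxis_atBot (g : SL(2, ℝ)) :
    Tendsto (fun t => toSphere (g • imAxis t)) atBot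
      (𝓝 (bdryToSphere ((g : GL (Fin 2) ℝ) • ((0 : ℝ) : Bdry)))) := by
  have hdet : g 0 0 * g 1 1 - g 0 1 * g 1 0 = 1 := by rw [← det_fin_two, g.det_coe]
  have hcoe : ∀ t, ((g • imAxis t : ℍ) : ℂ) =
      (g 0 0 * imAxis t + g 0 1) / (g 1 0 * imAxis t + g 1 1) :=
    fun t => by simp [coe_specialLinearGroup_apply]
  have hlim : ∀ a b : ℝ, Tendsto (fun t => a * (imAxis t : ℂ) + b) atBot (𝓝 b) := fun a b => by
    simpa using (tendsto_coe_imAxis_atBot.const_mul (a : ℂ)).add_const (b : ℂ)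
  rw [OnePoint.smul_some_eq_ite]
  simp only [SpecialLinearGroup.coe_GL_coe_matrix, mul_zero, zero_add]
  split_ifs with h₁₁
  · have h₀₁ : (g 0 1 : ℂ) ≠ 0 := by
      rw [h₁₁] at hdet; exact_mod_cast left_ne_zero_of_mul (by linarith : g 0 1 * g 1 0 ≠ 0)
    have hinv : Tendsto (fun t => ((g • imAxis t : ℍ) : ℂ)⁻¹) atBot (𝓝[≠] 0) := by
      refine tendsto_nhdsWithin_iff.mpr ⟨?_, .of_forall fun t => inv_ne_zero (g • imAxis t).ne_zero⟩
      have h := (hlim (g 1 0) (g 1 1)).div (hlim (g 0 0) (g 0 1)) h₀₁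
      rw [Pi.div_def] at h
      simpa [hcoe, inv_div, h₁₁] using h
    simpa [toSphere, bdryToSphere] using
      tendsto_coe_nhds_infty_of_tendsto_cobounded (tendsto_inv₀_nhdsNE_zero.comp hinv)
  · have h : Tendsto (fun t => ((g • imAxis t : ℍ) : ℂ)) atBot (𝓝 ((g 0 1 / g 1 1 : ℝ) : ℂ)) := by
      push_cast
      simp only [hcoe]
      exact (hlim (g 0 0) (g 0 1)).div (hlim (g 1 0) (g 1 1)) (by exact_mod_cast h₁₁)
    exact (OnePoint.continuous_coe.tendsto _).comp h

lemma flipSL_smul_zero : (flipSL : GL (Fin 2) ℝ) • ((0 : ℝ) : Bdry) = ∞ := by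
  rw [OnePoint.smul_some_eq_ite]
  simp [flipSL]

lemma joinsBdry_smul_imAxis (g : SL(2, ℝ)) :
    JoinsBdry (fun t => g • imAxis t) ((g : GL (Fin 2) ℝ) • ((0 : ℝ) : Bdry))
      ((g : GL (Fin 2) ℝ) • ∞) := by
  refine ⟨tendsto_toSphere_smul_imAxis_atBot g, ?_⟩
  have h := (tendsto_toSphere_smul_imAxis_atBot (g * flipSL)).comp tendsto_neg_atTop_atBot
  rw [map_mul, mul_smul, flipSL_smul_zero] at h
  simpa [Function.comp_def, mul_smul, flipSL_smul_imAxis] using h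

lemma bdryToSphere_injective : Function.Injective bdryToSphere :=
  Option.map_injective Complex.ofReal_injective

lemma JoinsBdry.unique {c : ℝ → ℍ} {a b a' b' : Bdry} (h : JoinsBdry c a b)
    (h' : JoinsBdry c a' b') : a = a' ∧ b = b' :=
  ⟨bdryToSphere_injective (tendsto_nhds_unique h.1 h'.1),
    bdryToSphere_injective (tendsto_nhds_unique h.2 h'.2)⟩

lemma smul_imAxis_of_fixes_zero_infty {γ : SL(2, ℝ)}
    (h₀ : (γ : GL (Fin 2) ℝ) • ((0 : ℝ) : Bdry) = ((0 : ℝ) : Bdry))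
    (hinf : (γ : GL (Fin 2) ℝ) • (∞ : Bdry) = ∞) (t : ℝ) :
    γ • imAxis t = imAxis (log (γ 0 0 ^ 2) + t) := by
  have h₁₀ : γ 1 0 = 0 := by simpa using OnePoint.smul_infty_eq_self_iff.mp hinf
  have hdet : γ 0 0 * γ 1 1 = 1 := by
    simpa [h₁₀] using (show γ 0 0 * γ 1 1 - γ 0 1 * γ 1 0 = 1 by rw [← det_fin_two, γ.det_coe])
  have h₁₁ : γ 1 1 ≠ 0 := right_ne_zero_of_mul_eq_one hdet
  have h₀₁ : γ 0 1 = 0 := by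
    rw [OnePoint.smul_some_eq_ite] at h₀
    simpa [h₁₀, h₁₁] using h₀
  have h₀₀ : γ 0 0 ≠ 0 := left_ne_zero_of_mul_eq_one hdet
  ext1
  rw [coe_specialLinearGroup_apply, coe_imAxis, coe_imAxis, exp_add, exp_log (by positivity)]
  simp only [h₁₀, h₀₁, Algebra.algebraMap_self, RingHom.id_apply, Complex.ofReal_zero, zero_mul,
    add_zero, zero_add]
  rw [eq_inv_of_mul_eq_one_right hdet]
  push_cast
  field_simp

lemma range_smul_imAxis_subset {g h : SL(2, ℝ)}
    (h₀ : (g : GL (Fin 2) ℝ) • ((0 : ℝ) : Bdry) = (h : GL (Fin 2) ℝ) • ((0 : ℝ) : Bdry))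
    (hinf : (g : GL (Fin 2) ℝ) • (∞ : Bdry) = (h : GL (Fin 2) ℝ) • ∞) :
    range (fun t => g • imAxis t) ⊆ range (fun t => h • imAxis t) := by
  have hγ : ∀ x : Bdry, (g : GL (Fin 2) ℝ) • x = (h : GL (Fin 2) ℝ) • x →
      ((h⁻¹ * g : SL(2, ℝ)) : GL (Fin 2) ℝ) • x = x := by
    intro x hx
    rw [map_mul, map_inv, mul_smul, hx, inv_smul_smul]
  rintro _ ⟨t, rfl⟩
  refine ⟨log ((h⁻¹ * g) 0 0 ^ 2) + t, show h • _ = g • _ from ?_⟩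
  rw [← smul_imAxis_of_fixes_zero_infty (hγ _ h₀) (hγ _ hinf), ← mul_smul, mul_inv_cancel_left]

lemma idealGeodesic_eq_range {c : ℝ → ℍ} {α β : Bdry} (hc : IsGeodesicLine c)
    (hj : JoinsBdry c α β) : ∃ g : SL(2, ℝ), idealGeodesic α β = range (fun t => g • imAxis t) := by
  have ends : ∀ {c : ℝ → ℍ}, IsGeodesicLine c → JoinsBdry c α β → ∃ g : SL(2, ℝ),
      c = (fun t => g • imAxis t) ∧ (g : GL (Fin 2) ℝ) • ((0 : ℝ) : Bdry) = α ∧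
        (g : GL (Fin 2) ℝ) • ∞ = β := by
    intro c hc hj
    obtain ⟨g, hg⟩ := exists_smul_imAxis_eq hc
    obtain rfl : c = _ := funext hg
    exact ⟨g, rfl, (joinsBdry_smul_imAxis g).unique hj⟩
  obtain ⟨g, rfl, rfl, rfl⟩ := ends hc hj
  refine ⟨g, (Subset.antisymm ?_ fun z hz => ⟨_, hc, hj, hz⟩)⟩
  rintro z ⟨c', hc', hj', hz⟩
  obtain ⟨g', rfl, h₀, hinf⟩ := ends hc' hj'
  exact range_smul_imAxis_subset h₀ hinf hz

theorem IsNearestProj.lipschitzWith_one {α β : Bdry} {p : ℍ → ℍ} (hp : IsNearestProj α β p) :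
    LipschitzWith 1 p := by
  obtain ⟨c, hc, hj, -⟩ := (hp (imAxis 0)).1
  obtain ⟨g, hg⟩ := idealGeodesic_eq_range hc hj
  have hproj : ∀ x, p x = g • imAxis (log ‖((g⁻¹ • x : ℍ) : ℂ)‖) := by
    intro x
    obtain ⟨s, hs⟩ : ∃ s, g • imAxis s = p x := by simpa [hg] using (hp x).1
    have hmin : ∀ t, dist (g⁻¹ • x) (imAxis s) ≤ dist (g⁻¹ • x) (imAxis t) := by
      have e : ∀ y, dist (g⁻¹ • x) y = dist x (g • y) := fun y => by
        rw [← (isometry_smul ℍ g).dist_eq, smul_inv_smul]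
      intro t
      rw [e, e, hs]
      exact (hp x).2 _ (hg ▸ ⟨t, rfl⟩)
    rw [← hs, eq_log_norm_of_forall_dist_imAxis_le hmin]
  refine LipschitzWith.of_dist_le_mul fun x y => ?_
  rw [hproj, hproj, (isometry_smul ℍ g).dist_eq, dist_imAxis, NNReal.coe_one, one_mul,
    ← (isometry_smul ℍ g⁻¹).dist_eq x y]
  exact abs_log_norm_sub_le_dist _ _

end Geometry

lemma dist_iterate_apply_le_mul {X : Type*} [PseudoMetricSpace X] {f : X → X} {C : ℝ}
    (hf : ∀ x, dist (f x) x ≤ C) (j : ℕ) (x : X) : dist (f^[j] x) x ≤ j * C := by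
  induction j with
  | zero => simp
  | succ j ih =>
    calc dist (f^[j + 1] x) x ≤ dist (f (f^[j] x)) (f^[j] x) + dist (f^[j] x) x := by
          rw [Function.iterate_succ_apply']; exact dist_triangle _ _ _
      _ ≤ C + j * C := add_le_add (hf _) ih
      _ = (j + 1 : ℕ) * C := by push_cast; ring

lemma tendsto_iterate_apply_of_lt {α ι : Type*} {f : α → α} {la : Filter α} {l : Filter ι}
    (hf : Tendsto f la la) {x : ι → α} (hx : Tendsto x l la) {r : ι → ℕ} {n : ℕ}
    (hr : ∀ i, r i < n) : Tendsto (fun i => f^[r i] (x i)) l la := by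
  intro s hs
  have hall : ∀ᶠ i in l, ∀ j ∈ Iio n, f^[j] (x i) ∈ s :=
    (finite_Iio n).eventually_all.mpr fun j _ => (hf.iterate j).comp hx hs
  exact hall.mono fun i hi => hi (r i) (hr i)

lemma tendsto_natCast_div_natCast_div {n : ℕ} (hn : 0 < n) :
    Tendsto (fun m : ℕ => (m : ℝ) / (m / n : ℕ)) atTop (𝓝 n) := by
  have hn' : (0 : ℝ) < n := Nat.cast_pos.mpr hn
  have h := (tendsto_nat_floor_div_atTop (R := ℝ)).comp
    (tendsto_natCast_atTop_atTop.atTop_div_const hn')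
  have h' := (h.inv₀ one_ne_zero).const_mul (n : ℝ)
  rw [inv_one, mul_one] at h'
  refine h'.congr fun m => ?_
  simp only [Function.comp_apply, Nat.floor_div_eq_div, inv_div]
  field_simp

lemma tendsto_div_of_abs_sub_le {ι : Type*} {l : Filter ι} {a b m q : ι → ℝ} {w c B : ℝ}
    (ha : Tendsto (fun i => a i / m i) l (𝓝 w)) (hmq : Tendsto (fun i => m i / q i) l (𝓝 c))
    (hq : Tendsto q l atTop) (hm : ∀ᶠ i in l, m i ≠ 0) (hab : ∀ i, |b i - a i| ≤ B) :
    Tendsto (fun i => b i / q i) l (𝓝 (w * c)) := by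
  have herr : Tendsto (fun i => (b i - a i) / q i) l (𝓝 0) := by
    refine squeeze_zero_norm' ?_ ((tendsto_const_nhds (x := B)).div_atTop hq)
    filter_upwards [hq.eventually_gt_atTop 0] with i hi
    rw [Real.norm_eq_abs, abs_div, abs_of_pos hi]
    exact div_le_div_of_nonneg_right (hab i) hi.le
  have h := (ha.mul hmq).add herr
  rw [add_zero] at h
  refine h.congr' ?_
  filter_upwards [hm] with i hi
  rw [div_mul_div_cancel₀ hi, ← add_div, add_sub_cancel]

lemma CanonicalLift.exists_dist_apply_le {G : Type*} [Group G] [MulAction G Hyp]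
    (hG : DeckAction G) {F : Hyp ≃ₜ Hyp} (hF : CanonicalLift G F) :
    ∃ C : ℝ, ∀ x, dist (F x) x ≤ C := by
  obtain ⟨K, hK, hcover⟩ := hG.cocompact
  obtain ⟨C, hC⟩ := (hK.image (F.continuous.dist continuous_id)).bddAbove
  refine ⟨C, fun x => ?_⟩
  obtain ⟨g, hg⟩ := hcover x
  rw [← (hG.isometric g).dist_eq, ← hF.equivariant]
  exact hC (mem_image_of_mem _ hg)

lemma CanonicalLift.tendsto_tendsToBdry {G : Type*} [Group G] [MulAction G Hyp]
    {F : Hyp ≃ₜ Hyp} (hF : CanonicalLift G F) (b : Bdry) :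
    Tendsto F (tendsToBdry b) (tendsToBdry b) :=
  tendsto_comap_iff.mpr (hF.bdryId b)

theorem InRotSet.of_iterate {f : Hyp → Hyp} {n : ℕ} (hn : 0 < n) {α β : Bdry} {v : ℝ}
    (h : InRotSet f^[n] α β v) : InRotSet f α β (v / n) := by
  rcases h with rfl | ⟨hab, hv, x, m, π, hπ, hm, hx, hy, hd⟩
  · exact .inl (zero_div _)
  refine .inr ⟨hab, div_pos hv (Nat.cast_pos.mpr hn), x, fun k => n * m k, π, hπ,
    tendsto_atTop_mono (fun k => Nat.le_mul_of_pos_left _ hn) hm, hx,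
    by simpa only [Function.iterate_mul] using hy, ?_⟩
  simpa [Function.iterate_mul, div_div, mul_comm] using hd.div_const (n : ℝ)

theorem InRotSet.iterate {f : Hyp → Hyp} {C : ℝ} (hC : ∀ x, dist (f x) x ≤ C) {α β : Bdry}
    (hα : Tendsto f (tendsToBdry α) (tendsToBdry α)) {n : ℕ} (hn : 0 < n) {v : ℝ}
    (h : InRotSet f α β (v / n)) : InRotSet f^[n] α β v := by
  have hn' : (0 : ℝ) < n := Nat.cast_pos.mpr hn
  rcases h with h | ⟨hab, hv, x, m, π, hπ, hm, hx, hy, hd⟩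
  · exact .inl (by simpa [hn'.ne'] using h)
  set y := fun k => f^[m k % n] (x k)
  have hfy : ∀ k, (f^[n])^[m k / n] (y k) = f^[m k] (x k) := fun k => by
    rw [← Function.iterate_mul, ← Function.iterate_add_apply, Nat.div_add_mod]
  have hq : Tendsto (fun k => m k / n) atTop atTop := (Nat.tendsto_div_const_atTop hn.ne').comp hm
  have hC₀ : 0 ≤ C := dist_nonneg.trans (hC (x 0))
  have hproj : ∀ k, |dist (π (y k)) (π (f^[m k] (x k))) - dist (π (x k)) (π (f^[m k] (x k)))|
      ≤ n * C := fun k =>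
    calc _ ≤ dist (π (y k)) (π (x k)) := abs_dist_sub_le _ _ _
      _ ≤ dist (y k) (x k) := by simpa using hπ.lipschitzWith_one.dist_le_mul (y k) (x k)
      _ ≤ (m k % n : ℕ) * C := dist_iterate_apply_le_mul hC _ _
      _ ≤ n * C := by gcongr; exact (Nat.mod_lt _ hn).le
  have hspeed := tendsto_div_of_abs_sub_le hd ((tendsto_natCast_div_natCast_div hn).comp hm)
    (tendsto_natCast_atTop_atTop.comp hq)
    ((hm.eventually_ne_atTop 0).mono fun k hk => Nat.cast_ne_zero.mpr hk) hproj
  rw [div_mul_cancel₀ v hn'.ne'] at hspeed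
  have hstart : Tendsto (fun k => toSphere (y k)) atTop (𝓝 (bdryToSphere α)) :=
    (tendsto_comap_iff (g := toSphere)).mp <|
      tendsto_iterate_apply_of_lt hα (tendsto_comap_iff.mpr hx) fun k => Nat.mod_lt _ hn
  exact .inr ⟨hab, by simpa [hn'] using hv, y, fun k => m k / n, π, hπ, hq,
    hstart, by simpa only [hfy] using hy, by simpa only [hfy] using hspeed⟩

/-- For the canonical lift `F` of a homeomorphism of a closed
orientable hyperbolic surface homotopic to the identity, `ρ(fⁿ) = n·ρ(f)` for all
`n ≥ 1`: `(α,β,v) ∈ ρ(fⁿ)` iff `(α,β,v/n) ∈ ρ(f)`.  (The canonical lift of `fⁿ`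
is `Fⁿ`.) -/
theorem rotSet_iterate {G : Type*} [Group G] [MulAction G Hyp]
    (hG : DeckAction G) (F : Hyp ≃ₜ Hyp) (hF : CanonicalLift G F)
    (n : ℕ) (hn : 1 ≤ n) (α β : Bdry) (v : ℝ) :
    InRotSet (⇑F)^[n] α β v ↔ InRotSet ⇑F α β (v / n) := by
  obtain ⟨C, hC⟩ := hF.exists_dist_apply_le hG
  exact ⟨InRotSet.of_iterate hn, InRotSet.iterate hC (hF.tendsto_tendsToBdry α) hn⟩
end
end
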